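/- Let H be a complex inner product space, q ∈ ℝ, let ξ₀ ∈ H be a unit vector (⟨ξ₀, ξ₀⟩ = 1) and let ξ₁ ∈ H satisfy ⟨ξ₀, ξ₁⟩ = 0 = ⟨ξ₁, ξ₀⟩. Then for every n ≥ 0, H_n^q(s_{ξ₀})(ξ₁) = ξ₀^{⊗n} ⊗ ξ₁ (with the convention that the n = 0 term is ξ₁). -/

import Mathlib

noncomputable section

variable {H : Type*} [NormedAddCommGroup H] [InnerProductSpace ℂ H]

/-- `[n]_q = 1 + q + ⋯ + q^(n-1)`. -/
def qInt (q : ℝ) (n : ℕ) : ℝ := ∑ i ∈ Finset.range n, q ^ i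

/-- The `q`-Hermite polynomials (with complex coefficients):
`H₀ = 1`, `H₁ = X` and `X·Hₙ = Hₙ₊₁ + [n]_q·Hₙ₋₁`. -/
def qHermite (q : ℝ) : ℕ → Polynomial ℂ
  | 0 => 1
  | 1 => Polynomial.X
  | n + 2 =>
      Polynomial.X * qHermite q (n + 1) - Polynomial.C ((qInt q (n + 1) : ℝ) : ℂ) * qHermite q n

/-- The simple tensor `ζ 0 ⊗ ⋯ ⊗ ζ (n-1)` in the algebraic Fock space
`F(H) = ⨁ₙ H^{⊗n}`, realized as the tensor algebra (for `n = 0` this is the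
vacuum vector `Ω = 1`). -/
def st (n : ℕ) (ζ : Fin n → H) : TensorAlgebra ℂ H :=
  (List.ofFn fun i => TensorAlgebra.ι ℂ (ζ i)).prod

/-- Remove the `i`-th entry from a tuple. -/
def removeNth {α : Type*} : {n : ℕ} → Fin n → (Fin n → α) → Fin (n - 1) → α
  | 0, i, _ => i.elim0
  | _ + 1, i, ζ => fun j => ζ (i.succAbove j)

/-- `c` is the family of `q`-creation operators. -/
def IsCreation (c : H → Module.End ℂ (TensorAlgebra ℂ H)) : Prop :=
  ∀ (ξ : H) (n : ℕ) (ζ : Fin n → H), c ξ (st n ζ) = st (n + 1) (Fin.cons ξ ζ)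

/-- `a` is the family of `q`-annihilation operators. -/
def IsAnnihilation (q : ℝ) (a : H → Module.End ℂ (TensorAlgebra ℂ H)) : Prop :=
  ∀ (ξ : H) (n : ℕ) (ζ : Fin n → H),
    a ξ (st n ζ) =
      ∑ i : Fin n, ((q : ℂ) ^ (i : ℕ) * (inner ℂ ξ (ζ i) : ℂ)) • st (n - 1) (removeNth i ζ)

/-!
With `vₙ = ξ₀^{⊗n} ⊗ ξ₁`, creation gives `c_{ξ₀} vₙ = vₙ₊₁`, and annihilation by `ξ₀` kills the
final `ξ₁` and removes the `i`-th copy of `ξ₀` with weight `q^i`, so `a_{ξ₀} vₙ = [n]_q vₙ₋₁`.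
Hence `s_{ξ₀} vₙ = vₙ₊₁ + [n]_q vₙ₋₁`, which is the recurrence defining `H_n^q`, and
induction gives `H_n^q(s_{ξ₀}) v₀ = vₙ`.
-/

theorem removeNth_castSucc_snoc {α : Type*} {m : ℕ} (i : Fin (m + 1)) (f : Fin (m + 1) → α) (b : α) :
    removeNth i.castSucc (Fin.snoc f b) = Fin.snoc (fun j : Fin m => f (i.succAbove j)) b := by
  funext j
  refine Fin.lastCases ?_ (fun k => ?_) j
  · change (Fin.snoc f b : Fin (m + 2) → α) (i.castSucc.succAbove (Fin.last m)) = _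
    rw [Fin.succAbove_of_le_castSucc _ _ (by simpa using i.le_last), Fin.succ_last]
    simp
  · change (Fin.snoc f b : Fin (m + 2) → α) (i.castSucc.succAbove k.castSucc) = _
    rw [Fin.castSucc_succAbove_castSucc]
    simp

theorem aeval_qHermite_apply_eq {M : Type*} [AddCommGroup M] [Module ℂ M] (q : ℝ)
    (s : Module.End ℂ M) (v : ℕ → M) (h₀ : s (v 0) = v 1)
    (hstep : ∀ m, s (v (m + 1)) = v (m + 2) + ((qInt q (m + 1) : ℝ) : ℂ) • v m) (n : ℕ) :
    Polynomial.aeval s (qHermite q n) (v 0) = v n := by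
  induction n using Nat.twoStepInduction with
  | zero => simp [qHermite]
  | one => simpa [qHermite] using h₀
  | more m ih₀ ih₁ =>
    simp only [qHermite, map_sub, map_mul, Polynomial.aeval_X, Polynomial.aeval_C,
      LinearMap.sub_apply, Module.End.mul_apply, Module.algebraMap_end_apply, ih₀, ih₁, hstep]
    abel

theorem IsCreation.apply_st_snoc {c : H → Module.End ℂ (TensorAlgebra ℂ H)} (hc : IsCreation c)
    (ξ ζ : H) (n : ℕ) :
    c ξ (st (n + 1) (Fin.snoc (fun _ : Fin n => ξ) ζ)) =
      st (n + 2) (Fin.snoc (fun _ : Fin (n + 1) => ξ) ζ) := by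
  rw [hc, Fin.cons_snoc_eq_snoc_cons]
  congr 2
  funext j
  exact Fin.cases rfl (fun _ => rfl) j

theorem IsAnnihilation.apply_st_one {q : ℝ} {a : H → Module.End ℂ (TensorAlgebra ℂ H)}
    (ha : IsAnnihilation q a) {ξ ζ : H} (hξζ : (inner ℂ ξ ζ : ℂ) = 0) :
    a ξ (st 1 (Fin.snoc (fun _ : Fin 0 => ξ) ζ)) = 0 := by
  rw [ha]
  simp [Fin.snoc, hξζ]

theorem IsAnnihilation.apply_st_snoc {q : ℝ} {a : H → Module.End ℂ (TensorAlgebra ℂ H)}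
    (ha : IsAnnihilation q a) {ξ ζ : H} (hξ : (inner ℂ ξ ξ : ℂ) = 1)
    (hξζ : (inner ℂ ξ ζ : ℂ) = 0) (m : ℕ) :
    a ξ (st (m + 2) (Fin.snoc (fun _ : Fin (m + 1) => ξ) ζ)) =
      ((qInt q (m + 1) : ℝ) : ℂ) • st (m + 1) (Fin.snoc (fun _ : Fin m => ξ) ζ) := by
  rw [ha, Fin.sum_univ_castSucc]
  simp only [Fin.snoc_last, hξζ, mul_zero, zero_smul, add_zero, Fin.snoc_castSucc, hξ, mul_one,
    Fin.val_castSucc, removeNth_castSucc_snoc]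
  rw [← Finset.sum_smul, qInt, Fin.sum_univ_eq_sum_range (fun i => (q : ℂ) ^ i)]
  push_cast
  rfl

theorem stmt10_general (q : ℝ) (c a : H → Module.End ℂ (TensorAlgebra ℂ H))
    (hc : IsCreation c) (ha : IsAnnihilation q a)
    (ξ₀ : H) (hξ₀ : (inner ℂ ξ₀ ξ₀ : ℂ) = 1)
    (ξ₁ : H) (horth₁ : (inner ℂ ξ₀ ξ₁ : ℂ) = 0)
    (n : ℕ) :
    (Polynomial.aeval (c ξ₀ + a ξ₀) (qHermite q n)) (st 1 fun _ => ξ₁) =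
      st (n + 1) (Fin.snoc (fun _ : Fin n => ξ₀) ξ₁) := by
  have hv₀ : (st 1 fun _ => ξ₁) = st 1 (Fin.snoc (fun _ : Fin 0 => ξ₀) ξ₁) := by
    congr 1
  rw [hv₀]
  refine aeval_qHermite_apply_eq q _ (fun n => st (n + 1) (Fin.snoc (fun _ : Fin n => ξ₀) ξ₁))
    ?_ (fun m => ?_) n
  · rw [LinearMap.add_apply, hc.apply_st_snoc, ha.apply_st_one horth₁, add_zero]
  · rw [LinearMap.add_apply, hc.apply_st_snoc, ha.apply_st_snoc hξ₀ horth₁]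

/-- If `ξ₀` is a unit vector and `ξ₁ ⊥ ξ₀`, then `H_n^q(s_{ξ₀}) ξ₁ = ξ₀^{⊗n} ⊗ ξ₁`. -/
theorem stmt10 (q : ℝ) (c a : H → Module.End ℂ (TensorAlgebra ℂ H))
    (hc : IsCreation c) (ha : IsAnnihilation q a)
    (ξ₀ : H) (hξ₀ : (inner ℂ ξ₀ ξ₀ : ℂ) = 1)
    (ξ₁ : H) (horth₁ : (inner ℂ ξ₀ ξ₁ : ℂ) = 0) (horth₂ : (inner ℂ ξ₁ ξ₀ : ℂ) = 0)
    (n : ℕ) :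
    (Polynomial.aeval (c ξ₀ + a ξ₀) (qHermite q n)) (st 1 fun _ => ξ₁) =
      st (n + 1) (Fin.snoc (fun _ : Fin n => ξ₀) ξ₁) :=
  stmt10_general q c a hc ha ξ₀ hξ₀ ξ₁ horth₁ n
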